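/- Suppose f : ℝ^d → ℝ is twice continuously differentiable, L-smooth, σ-strongly convex, and has γ-Lipschitz Hessian, with minimizer μ*. Fix μ ∈ ℝ^d and a symmetric positive definite d×d matrix Σ with Σ ⪯ τ^{-1}·I, and suppose ξ·Σ^{-1} ⪯ ∇²f(μ) ⪯ 𝓛·Σ^{-1} for some ξ, 𝓛 > 0. If f(μ) − f(μ*) ≤ ξ²σ³/(8γ²(Lτ^{-1} + 2ξ)²), then −‖∇f(μ)‖²_Σ ≤ −ξ·(f(μ) − f(μ*)), i.e. ∇f(μ)ᵀΣ∇f(μ) ≥ ξ·(f(μ) − f(μ*)). -/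

import Mathlib

open MeasureTheory ProbabilityTheory Matrix
open scoped BigOperators RealInnerProductSpace

noncomputable section

abbrev Vec (d : ℕ) := EuclideanSpace ℝ (Fin d)
abbrev Mat (d : ℕ) := Matrix (Fin d) (Fin d) ℝ

/-- View a Euclidean vector as a plain function. -/
def toPi {d : ℕ} (u : Vec d) : Fin d → ℝ := u
/-- View a plain function as a Euclidean vector. -/
def ofPi {d : ℕ} (u : Fin d → ℝ) : Vec d := WithLp.toLp 2 u

/-- Matrix-vector multiplication on Euclidean space. -/
def mvec {d : ℕ} (A : Mat d) (u : Vec d) : Vec d := ofPi (A.mulVec (toPi u))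

/-- The standard Gaussian measure N(0, I_d) on ℝ^d. -/
def gaussD (d : ℕ) : Measure (Vec d) :=
  (Measure.pi fun _ : Fin d => gaussianReal 0 1).map (MeasurableEquiv.toLp 2 (Fin d → ℝ))

/-- Frobenius norm of a matrix. -/
def matFrobNorm {m n : ℕ} (A : Matrix (Fin m) (Fin n) ℝ) : ℝ :=
  Real.sqrt (∑ i, ∑ j, (A i j) ^ 2)

/-- Operator (spectral) norm of a matrix. -/
def matOpNorm {m n : ℕ} (A : Matrix (Fin m) (Fin n) ℝ) : ℝ :=
  ‖LinearMap.toContinuousLinearMap (Matrix.toEuclideanLin A)‖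

/-- Loewner order `A ⪯ B`. -/
def loeLE {d : ℕ} (A B : Mat d) : Prop := (B - A).PosSemidef

/-- Hessian matrix of `f` at `x`. -/
def hess {d : ℕ} (f : Vec d → ℝ) (x : Vec d) : Mat d :=
  Matrix.of fun i j =>
    iteratedFDeriv ℝ 2 f x ![EuclideanSpace.single i 1, EuclideanSpace.single j 1]

/-- Membership in `S = {Σ symmetric : ζ⁻¹ I ⪯ Σ ⪯ τ⁻¹ I}`. -/
def Smem {d : ℕ} (τ ζ : ℝ) (A : Mat d) : Prop :=
  A.IsSymm ∧ loeLE (ζ⁻¹ • 1) A ∧ loeLE A (τ⁻¹ • 1)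

/-- Membership in `S' = {A symmetric : τ I ⪯ A ⪯ ζ I}`. -/
def S'mem {d : ℕ} (τ ζ : ℝ) (A : Mat d) : Prop :=
  A.IsSymm ∧ loeLE (τ • 1) A ∧ loeLE A (ζ • 1)

/-- The square root of a positive semidefinite matrix (the definition `Matrix.PosSemidef.sqrt`
of the older Mathlib, which has since been removed). -/
def Matrix.PosSemidef.sqrt {d : ℕ} {A : Mat d} (hA : A.PosSemidef) : Mat d :=
  hA.1.eigenvectorUnitary.1 * diagonal ((↑) ∘ (√·) ∘ hA.1.eigenvalues) *
    (star hA.1.eigenvectorUnitary : Mat d)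

/-- The regularized reparameterized objective `Q_α(μ, Σ)`. -/
def Qa {d : ℕ} (f : Vec d → ℝ) (α : ℝ) (μ : Vec d) (S : Mat d) (hS : S.PosSemidef) : ℝ :=
  (∫ u, f (μ + α • mvec hS.sqrt u) ∂ gaussD d) - α ^ 2 / 2 * Real.log S.det

/-!
Strong convexity at the minimiser gives `σ/2 ‖μ - μ*‖² ≤ f μ - f μ*`, and together with the
closeness hypothesis this makes the cubic Taylor error `γ ‖μ* - μ‖³` at most `f μ - f μ*`.
The second-order Taylor bound along the segment from `μ` to `μ*` then yields
`f μ - f μ* ≤ -2 ⟪∇f(μ), v⟫ - vᵀ ∇²f(μ) v` for `v = μ* - μ`. Since `∇²f(μ) ⪰ ξ Σ⁻¹`, the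
right-hand side is at most `‖∇f(μ)‖²_Σ / ξ` by Young's inequality
`2 ⟪g, x⟫ ≤ ‖g‖²_Σ + ‖x‖²_{Σ⁻¹}`.
-/

theorem Matrix.PosDef.two_mul_dotProduct_le {n : Type*} [Fintype n] [DecidableEq n]
    {S : Matrix n n ℝ} (hS : S.PosDef) (g x : n → ℝ) :
    2 * (g ⬝ᵥ x) ≤ g ⬝ᵥ S *ᵥ g + x ⬝ᵥ S⁻¹ *ᵥ x := by
  set y := S⁻¹ *ᵥ x
  have hSy : S *ᵥ y = x := by
    rw [Matrix.mulVec_mulVec, Matrix.mul_nonsing_inv _ ((S.isUnit_iff_isUnit_det).1 hS.isUnit),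
      Matrix.one_mulVec]
  have hST : Sᵀ = S := by
    rw [← Matrix.conjTranspose_eq_transpose_of_trivial, hS.isHermitian.eq]
  have hsymm : y ⬝ᵥ S *ᵥ g = g ⬝ᵥ S *ᵥ y := by
    rw [Matrix.dotProduct_mulVec, ← Matrix.mulVec_transpose, dotProduct_comm, hST]
  have h := hS.posSemidef.dotProduct_mulVec_nonneg (g - y)
  simp only [star_trivial, Matrix.mulVec_sub, dotProduct_sub, sub_dotProduct, hSy, hsymm] at h
  rw [dotProduct_comm x y]
  linarith

theorem quadratic_taylor_le_of_le_deriv2 {φ φ' φ'' : ℝ → ℝ} {a b k : ℝ} (hab : a ≤ b)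
    (hφ : ∀ t, HasDerivAt φ (φ' t) t) (hφ' : ∀ t, HasDerivAt φ' (φ'' t) t)
    (hk : ∀ t ∈ Set.Icc a b, k ≤ φ'' t) :
    φ a + φ' a * (b - a) + k / 2 * (b - a) ^ 2 ≤ φ b := by
  rcases hab.eq_or_lt with rfl | hab
  · simp
  have hψ : ∀ t, HasDerivAt (fun t => φ t - k / 2 * (t - a) ^ 2) (φ' t - k * (t - a)) t := by
    intro t
    refine ((hφ t).sub ((((hasDerivAt_id' t).sub_const a).pow 2).const_mul (k / 2))).congr_deriv ?_
    push_cast; ring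
  have hψ' : ∀ t, HasDerivAt (fun t => φ' t - k * (t - a)) (φ'' t - k) t := by
    intro t
    exact ((hφ' t).sub (((hasDerivAt_id' t).sub_const a).const_mul k)).congr_deriv (by ring)
  have hconv : ConvexOn ℝ (Set.Icc a b) (fun t => φ t - k / 2 * (t - a) ^ 2) :=
    convexOn_of_hasDerivWithinAt2_nonneg (convex_Icc a b)
      (HasDerivAt.continuousOn fun t _ => hψ t)
      (fun t _ => (hψ t).hasDerivWithinAt) (fun t _ => (hψ' t).hasDerivWithinAt)
      (fun t ht => sub_nonneg.2 (hk t (interior_subset ht)))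
  have hslope := hconv.le_slope_of_hasDerivAt (Set.left_mem_Icc.2 hab.le)
    (Set.right_mem_Icc.2 hab.le) hab (hψ a)
  rw [slope_def_field, le_div_iff₀ (sub_pos.2 hab)] at hslope
  linarith

section

variable {d : ℕ}

theorem inner_eq_dotProduct_toPi (u v : Vec d) : ⟪u, v⟫ = toPi u ⬝ᵥ toPi v := by
  simp [PiLp.inner_apply, toPi, dotProduct, mul_comm]

theorem inner_mvec (A : Mat d) (u v : Vec d) : ⟪u, mvec A v⟫ = toPi u ⬝ᵥ A *ᵥ toPi v :=
  inner_eq_dotProduct_toPi u (mvec A v)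

theorem inner_mvec_sub (A B : Mat d) (v : Vec d) :
    ⟪v, mvec (A - B) v⟫ = ⟪v, mvec A v⟫ - ⟪v, mvec B v⟫ := by
  simp only [inner_mvec, Matrix.sub_mulVec, dotProduct_sub]

theorem abs_inner_mvec_le_matOpNorm (A : Mat d) (v : Vec d) :
    |⟪v, mvec A v⟫| ≤ matOpNorm A * ‖v‖ ^ 2 :=
  calc |⟪v, mvec A v⟫| ≤ ‖v‖ * ‖mvec A v‖ := abs_real_inner_le_norm _ _
    _ ≤ ‖v‖ * (matOpNorm A * ‖v‖) := by
        gcongr; exact (LinearMap.toContinuousLinearMap (Matrix.toEuclideanLin A)).le_opNorm v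
    _ = matOpNorm A * ‖v‖ ^ 2 := by ring

theorem fderiv_fderiv_apply_eq_inner_hess (f : Vec d → ℝ) (x v : Vec d) :
    fderiv ℝ (fderiv ℝ f) x v v = ⟪v, mvec (hess f x) v⟫ := by
  let b := (EuclideanSpace.basisFun (Fin d) ℝ).toBasis
  have hhess : LinearMap.toMatrix₂ b b (fderiv ℝ (fderiv ℝ f) x).toLinearMap₁₂ = hess f x := by
    ext i j
    simp [hess, iteratedFDeriv_two_apply, LinearMap.toMatrix₂_apply, b]
  have hv : RingHom.id ℝ ∘ b.repr v = toPi v := rfl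
  rw [inner_mvec, ← hhess, ← hv]
  exact apply_eq_dotProduct_toMatrix₂_mulVec b b (fderiv ℝ (fderiv ℝ f) x).toLinearMap₁₂ v v

theorem mul_neg_two_inner_sub_le_of_loeLE {S H : Mat d} {ξ : ℝ} (hS : S.PosDef) (hξ : 0 ≤ ξ)
    (hH : loeLE (ξ • S⁻¹) H) (g v : Vec d) :
    ξ * (-2 * ⟪g, v⟫ - ⟪v, mvec H v⟫) ≤ ⟪g, mvec S g⟫ := by
  rw [inner_mvec, inner_mvec, inner_eq_dotProduct_toPi]
  have hyoung := hS.two_mul_dotProduct_le (toPi g) (-(ξ • toPi v))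
  have hH' := hH.dotProduct_mulVec_nonneg (toPi v)
  simp only [star_trivial, Matrix.sub_mulVec, Matrix.smul_mulVec, Matrix.mulVec_neg,
    Matrix.mulVec_smul, dotProduct_sub, dotProduct_smul, dotProduct_neg, neg_dotProduct,
    smul_dotProduct, smul_eq_mul] at hyoung hH'
  nlinarith

theorem add_inner_gradient_add_le_of_lipschitz_hess {f : Vec d → ℝ} {γ : ℝ}
    (hf : ContDiff ℝ 2 f) (hγ0 : 0 ≤ γ)
    (hγ : ∀ x y : Vec d, matOpNorm (hess f x - hess f y) ≤ γ * ‖x - y‖) (x v : Vec d) :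
    f x + ⟪gradient f x, v⟫ + (⟪v, mvec (hess f x) v⟫ - γ * ‖v‖ ^ 3) / 2 ≤ f (x + v) := by
  let c : ℝ → Vec d := fun t => x + t • v
  have hc : ∀ t, HasDerivAt c v t := fun t => by
    simpa only [one_smul] using ((hasDerivAt_id' t).smul_const v).const_add x
  have hφ : ∀ t, HasDerivAt (fun t => f (c t)) (fderiv ℝ f (c t) v) t := fun t =>
    ((hf.differentiable two_ne_zero) (c t)).hasFDerivAt.comp_hasDerivAt t (hc t)
  have hφ' : ∀ t, HasDerivAt (fun t => fderiv ℝ f (c t) v) ⟪v, mvec (hess f (c t)) v⟫ t := by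
    intro t
    have hDf := ((hf.fderiv_right le_rfl).differentiable one_ne_zero (c t)).hasFDerivAt
    simpa [fderiv_fderiv_apply_eq_inner_hess] using
      (hDf.comp_hasDerivAt t (hc t)).clm_apply (hasDerivAt_const t v)
  have hbound : ∀ t ∈ Set.Icc (0 : ℝ) 1,
      ⟪v, mvec (hess f x) v⟫ - γ * ‖v‖ ^ 3 ≤ ⟪v, mvec (hess f (c t)) v⟫ := by
    rintro t ⟨ht0, ht1⟩
    have hdist : ‖c t - x‖ = t * ‖v‖ := by simp [c, norm_smul, abs_of_nonneg ht0]
    have hquad := (abs_le.1 (abs_inner_mvec_le_matOpNorm (hess f (c t) - hess f x) v)).1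
    have hlip := hγ (c t) x
    rw [inner_mvec_sub] at hquad
    rw [hdist] at hlip
    nlinarith [norm_nonneg v, mul_nonneg (mul_nonneg hγ0 (norm_nonneg v)) (sq_nonneg ‖v‖)]
  have := quadratic_taylor_le_of_le_deriv2 zero_le_one hφ hφ' hbound
  simpa [c, inner_gradient_left] using this

end

theorem half_mul_sq_norm_sub_le_sub_of_isLocalMin {E : Type*} [NormedAddCommGroup E]
    [InnerProductSpace ℝ E] [CompleteSpace E] {f : E → ℝ} {σ : ℝ} {x₀ : E}
    (hσ : ∀ x y : E, f x - f y ≥ ⟪gradient f y, x - y⟫ + σ / 2 * ‖x - y‖ ^ 2)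
    (hmin : IsLocalMin f x₀) (x : E) :
    σ / 2 * ‖x - x₀‖ ^ 2 ≤ f x - f x₀ := by
  have h := hσ x x₀
  rw [inner_gradient_left, hmin.fderiv_eq_zero, _root_.zero_apply] at h
  linarith

theorem mul_pow_three_le_of_le_div {σ γ ξ A R δ : ℝ} (hσ : 0 < σ) (hγ : 0 ≤ γ) (hξ : 0 < ξ)
    (hA : 2 * ξ ≤ A) (hR : 0 ≤ R) (hgrowth : σ / 2 * R ^ 2 ≤ δ)
    (hclose : δ ≤ ξ ^ 2 * σ ^ 3 / (8 * γ ^ 2 * A ^ 2)) :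
    γ * R ^ 3 ≤ δ := by
  have hδ : 0 ≤ δ := le_trans (by positivity) hgrowth
  rcases hγ.eq_or_lt with rfl | hγ
  · simpa using hδ
  have hA0 : 0 < A := by linarith
  rw [le_div_iff₀ (by positivity)] at hclose
  have hA2 : 4 * ξ ^ 2 ≤ A ^ 2 := by nlinarith
  have h32 : 32 * γ ^ 2 * δ ≤ σ ^ 3 := by
    refine le_of_mul_le_mul_left ?_ (pow_pos hξ 2)
    nlinarith [mul_le_mul_of_nonneg_left hA2 (by positivity : 0 ≤ 8 * γ ^ 2 * δ)]
  have hγR : γ * R ≤ σ / 4 := by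
    refine (pow_le_pow_iff_left₀ (by positivity) (by positivity) two_ne_zero).1 ?_
    refine le_of_mul_le_mul_left ?_ hσ
    nlinarith [mul_le_mul_of_nonneg_left hgrowth (by positivity : 0 ≤ 2 * γ ^ 2)]
  nlinarith [mul_le_mul_of_nonneg_right hγR (sq_nonneg R)]

theorem stmt15_general {d : ℕ}
    (f : Vec d → ℝ) (L σ γ : ℝ) (hL0 : 0 < L) (hσ0 : 0 < σ) (hγ0 : 0 ≤ γ)
    (hf : ContDiff ℝ 2 f)
    (hσ : ∀ x y : Vec d, f x - f y ≥ ⟪gradient f y, x - y⟫ + σ / 2 * ‖x - y‖ ^ 2)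
    (hγ : ∀ x y : Vec d, matOpNorm (hess f x - hess f y) ≤ γ * ‖x - y‖)
    (μstar : Vec d) (hμstar : ∀ z, f μstar ≤ f z)
    (μ : Vec d) (τ : ℝ) (hτ : 0 < τ)
    (S : Mat d) (hS : S.PosDef)
    (ξ : ℝ) (hξ0 : 0 < ξ)
    (hlow : loeLE (ξ • S⁻¹) (hess f μ))
    (hclose : f μ - f μstar ≤ ξ ^ 2 * σ ^ 3 / (8 * γ ^ 2 * (L * τ⁻¹ + 2 * ξ) ^ 2)) :
    ξ * (f μ - f μstar) ≤ ⟪gradient f μ, mvec S (gradient f μ)⟫ := by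
  have hgrowth : σ / 2 * ‖μstar - μ‖ ^ 2 ≤ f μ - f μstar := by
    rw [norm_sub_rev]
    exact half_mul_sq_norm_sub_le_sub_of_isLocalMin hσ (Filter.Eventually.of_forall hμstar) μ
  have hcube : γ * ‖μstar - μ‖ ^ 3 ≤ f μ - f μstar := by
    have hLτ : 0 < L * τ⁻¹ := mul_pos hL0 (inv_pos.2 hτ)
    exact mul_pow_three_le_of_le_div hσ0 hγ0 hξ0 (by linarith) (norm_nonneg _) hgrowth hclose
  have htaylor := add_inner_gradient_add_le_of_lipschitz_hess hf hγ0 hγ μ (μstar - μ)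
  rw [add_sub_cancel] at htaylor
  calc ξ * (f μ - f μstar)
      ≤ ξ * (-2 * ⟪gradient f μ, μstar - μ⟫ - ⟪μstar - μ, mvec (hess f μ) (μstar - μ)⟫) :=
        mul_le_mul_of_nonneg_left (by linarith) hξ0.le
    _ ≤ ⟪gradient f μ, mvec S (gradient f μ)⟫ :=
        mul_neg_two_inner_sub_le_of_loeLE hS hξ0.le hlow _ _

/-- when `μ` is close enough to optimality, the `Σ`-weighted gradient
norm dominates the suboptimality gap: `∇f(μ)ᵀ Σ ∇f(μ) ≥ ξ(f(μ) − f(μ*))`. -/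
theorem stmt15 {d : ℕ} (hd : 1 ≤ d)
    (f : Vec d → ℝ) (L σ γ : ℝ) (hL0 : 0 < L) (hσ0 : 0 < σ) (hγ0 : 0 ≤ γ)
    (hf : ContDiff ℝ 2 f)
    (hL : ∀ x y : Vec d, ‖gradient f x - gradient f y‖ ≤ L * ‖x - y‖)
    (hσ : ∀ x y : Vec d, f x - f y ≥ ⟪gradient f y, x - y⟫ + σ / 2 * ‖x - y‖ ^ 2)
    (hγ : ∀ x y : Vec d, matOpNorm (hess f x - hess f y) ≤ γ * ‖x - y‖)
    (μstar : Vec d) (hμstar : ∀ z, f μstar ≤ f z)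
    (μ : Vec d) (τ : ℝ) (hτ : 0 < τ)
    (S : Mat d) (hSsymm : S.IsSymm) (hS : S.PosDef) (hSle : loeLE S (τ⁻¹ • 1))
    (ξ 𝓛 : ℝ) (hξ0 : 0 < ξ) (h𝓛0 : 0 < 𝓛)
    (hlow : loeLE (ξ • S⁻¹) (hess f μ)) (hupp : loeLE (hess f μ) (𝓛 • S⁻¹))
    (hclose : f μ - f μstar ≤ ξ ^ 2 * σ ^ 3 / (8 * γ ^ 2 * (L * τ⁻¹ + 2 * ξ) ^ 2)) :
    ξ * (f μ - f μstar) ≤ ⟪gradient f μ, mvec S (gradient f μ)⟫ :=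
  stmt15_general f L σ γ hL0 hσ0 hγ0 hf hσ hγ μstar hμstar μ τ hτ S hS ξ hξ0 hlow hclose
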